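/- arXiv:2509.17994 — 3 statements merged into one kernel-verified Lean document; each statement's English description precedes it below -/
import Mathlib

section
/- Let X be a nonempty finite type, let D_0, D_1 be distributions on X, let γ ∈ (0, 1/10) and k ≥ 1. Set D_X := (1/2)(D_0 + D_1), let g be the associated posterior function, and suppose h : X → [0,1] is γ-calibrated for g under D_X. Set p := E_{D_X}[h] (so 0 < p < 1), D̃_1(z) := h(z)·D_X(z)/p, D̃_0(z) := (1−h(z))·D_X(z)/(1−p), and define h' : X^k → {0,1} by h'(z_1,…,z_k) = 1 if ∏_{i=1}^k h(z_i) > ∏_{i=1}^k (1−h(z_i)) and h' = 0 otherwise. Then |E_{D_1^⊗k}[h'] − E_{D_0^⊗k}[h']| ≥ d_TV(D̃_0^⊗k, D̃_1^⊗k) − 14·k·γ. -/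
/-- Expectation of `f` under the (finitely supported) distribution `D`. -/
noncomputable def expect {X : Type*} [Fintype X] (D f : X → ℝ) : ℝ := ∑ x, D x * f x

/-- `D` is a probability distribution on the finite type `X`. -/
def IsDist {X : Type*} [Fintype X] (D : X → ℝ) : Prop := (∀ x, 0 ≤ D x) ∧ ∑ x, D x = 1

/-- Total variation distance between two distributions on a finite type. -/
noncomputable def dTV {X : Type*} [Fintype X] (P Q : X → ℝ) : ℝ := (∑ x, |P x - Q x|) / 2

/-- `k`-fold product distribution on `Fin k → X`. -/
noncomputable def prodDist {X : Type*} (k : ℕ) (P : X → ℝ) : (Fin k → X) → ℝ :=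
  fun z => ∏ i, P (z i)

/-!
Calibration against the constant test gives `|p - 1/2| ≤ γ`; against a test `w ∘ h` it shows
that `D_b` and its tilt `D̃_b` are `4γ`-indistinguishable by tests that only see the values of
`h`. A hybrid argument lifts this to `4kγ` for the `k`-fold products and tests that only see
`(h z_i)_i`, such as `h'`. Finally `D̃_1^⊗k / D̃_0^⊗k = (∏ h / ∏ (1 - h)) · ((1 - p) / p)^k`,
and by Bernoulli's inequality the second factor is within `4kγ` of `1`, so `h'` loses at most
`4kγ` against the optimal distinguisher, whose advantage is `d_TV(D̃_0^⊗k, D̃_1^⊗k)`.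
-/

open Finset hiding expect expect_sub_distrib

section Expect

variable {X : Type*} [Fintype X]

lemma expect_sub_distrib (P f g : X → ℝ) :
    expect P (fun x => f x - g x) = expect P f - expect P g := by
  simp only [expect, mul_sub, sum_sub_distrib]

lemma expect_weight_sub_distrib (P Q f : X → ℝ) :
    expect (fun x => P x - Q x) f = expect P f - expect Q f := by
  simp only [expect, sub_mul, sum_sub_distrib]

lemma expect_mem_Icc {P f : X → ℝ} (hP : IsDist P) (hf : ∀ x, f x ∈ Set.Icc (0 : ℝ) 1) :
    expect P f ∈ Set.Icc (0 : ℝ) 1 :=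
  ⟨sum_nonneg fun x _ => mul_nonneg (hP.1 x) (hf x).1,
    hP.2 ▸ sum_le_sum fun x _ => mul_le_of_le_one_right (hP.1 x) (hf x).2⟩

lemma abs_expect_le {P f : X → ℝ} (hP : IsDist P) {M : ℝ} (hf : ∀ x, |f x| ≤ M) :
    |expect P f| ≤ M :=
  calc |expect P f| ≤ ∑ x, P x * |f x| := by
        simpa only [expect, abs_mul, abs_of_nonneg (hP.1 _)] using
          abs_sum_le_sum_abs (fun x => P x * f x) univ
    _ ≤ ∑ x, P x * M := sum_le_sum fun x _ => mul_le_mul_of_nonneg_left (hf x) (hP.1 x)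
    _ = M := by rw [← sum_mul, hP.2, one_mul]

lemma expect_one_sub {P : X → ℝ} (hP : IsDist P) (f : X → ℝ) :
    expect P (fun x => 1 - f x) = 1 - expect P f := by
  simp only [expect, mul_sub, mul_one, sum_sub_distrib, hP.2]

lemma isDist_tilt {P h : X → ℝ} (hP : IsDist P) (hh : ∀ x, 0 ≤ h x) {p : ℝ}
    (hp : p = expect P h) (hp0 : 0 < p) : IsDist (fun x => h x * P x / p) :=
  ⟨fun x => by have := hP.1 x; have := hh x; positivity, by
    simp only [← sum_div, hp, expect, mul_comm (h _)]
    exact div_self (hp ▸ hp0).ne'⟩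

lemma isDist_tilt_one_sub {P h : X → ℝ} (hP : IsDist P) (hh : ∀ x, h x ≤ 1) {p : ℝ}
    (hp : p = expect P h) (hp1 : p < 1) : IsDist (fun x => (1 - h x) * P x / (1 - p)) :=
  isDist_tilt hP (fun x => sub_nonneg.2 (hh x)) (by rw [expect_one_sub hP, hp]) (by linarith)

lemma isDist_midpoint {P Q : X → ℝ} (hP : IsDist P) (hQ : IsDist Q) :
    IsDist (fun x => (P x + Q x) / 2) :=
  ⟨fun x => by linarith [hP.1 x, hQ.1 x], by
    simp only [← sum_div, sum_add_distrib, hP.2, hQ.2]; norm_num⟩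

lemma isDist_prodDist {P : X → ℝ} (hP : IsDist P) (k : ℕ) : IsDist (prodDist k P) :=
  ⟨fun z => prod_nonneg fun i _ => hP.1 (z i), by
    simp only [prodDist, ← Fintype.sum_pow, hP.2, one_pow]⟩

lemma expect_prodDist_succ (P : X → ℝ) (n : ℕ) (f : (Fin (n + 1) → X) → ℝ) :
    expect (prodDist (n + 1) P) f =
      expect P (fun x => expect (prodDist n P) (fun t => f (Fin.cons x t))) := by
  simp only [expect, prodDist, mul_sum]
  rw [← (Fin.consEquiv fun _ => X).sum_comp, Fintype.sum_prod_type]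
  refine sum_congr rfl fun x _ => sum_congr rfl fun t _ => ?_
  simp [Fin.consEquiv, Fin.prod_univ_succ, mul_assoc]

end Expect

section Calibration

variable {X : Type*} [Fintype X]

lemma two_mul_mul_posterior {a b : ℝ} (ha : 0 ≤ a) (hb : 0 ≤ b) :
    2 * ((a + b) / 2 * (if 0 < a + b then b / (a + b) else 0)) = b := by
  split_ifs with hab
  · field_simp
  · have : b = 0 := by linarith
    simp [this]

lemma two_mul_mul_one_sub_posterior {a b : ℝ} (ha : 0 ≤ a) (hb : 0 ≤ b) :
    2 * ((a + b) / 2 * (1 - if 0 < a + b then b / (a + b) else 0)) = a := by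
  linarith [two_mul_mul_posterior ha hb]

lemma abs_expect_sub_tilt_le {μ g h u : X → ℝ} (hh : ∀ x, 0 ≤ h x) (hμ : ∀ x, 0 ≤ μ x)
    (hu : ∀ x, u x ∈ Set.Icc (0 : ℝ) 1) {q γ : ℝ} (hq : q = expect μ h) (hq0 : 0 < q)
    (hqγ : |q - 1 / 2| ≤ γ) (hcal : |expect μ (fun x => u x * (g x - h x))| ≤ γ) :
    |expect (fun x => 2 * (μ x * g x)) u - expect (fun x => h x * μ x / q) u| ≤ 4 * γ := by
  set S := expect μ (fun x => h x * u x)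
  have hS0 : 0 ≤ S := sum_nonneg fun x _ => mul_nonneg (hμ x) (mul_nonneg (hh x) (hu x).1)
  have hSq : S ≤ q := hq ▸ sum_le_sum fun x _ =>
    mul_le_mul_of_nonneg_left (mul_le_of_le_one_right (hh x) (hu x).2) (hμ x)
  have hsplit : expect (fun x => 2 * (μ x * g x)) u - expect (fun x => h x * μ x / q) u =
      2 * expect μ (fun x => u x * (g x - h x)) + (2 * q - 1) * (S / q) := by
    simp only [S, expect, ← sum_sub_distrib, mul_sum, sum_div, ← sum_add_distrib]
    refine sum_congr rfl fun x _ => ?_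
    field_simp
    ring
  have htilt : |(2 * q - 1) * (S / q)| ≤ 2 * γ := by
    rw [abs_mul, abs_of_nonneg (div_nonneg hS0 hq0.le)]
    calc |2 * q - 1| * (S / q) ≤ |2 * q - 1| * 1 :=
          mul_le_mul_of_nonneg_left ((div_le_one hq0).2 hSq) (abs_nonneg _)
      _ = 2 * |q - 1 / 2| := by rw [mul_one, ← abs_two, ← abs_mul]; ring_nf
      _ ≤ 2 * γ := by linarith
  rw [hsplit]
  calc _ ≤ |2 * expect μ (fun x => u x * (g x - h x))| + |(2 * q - 1) * (S / q)| :=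
        abs_add_le _ _
    _ ≤ 4 * γ := by rw [abs_mul, abs_two]; linarith

lemma abs_expect_sub_tilt_one_sub_le {μ g h u : X → ℝ} (hh : ∀ x, h x ≤ 1) (hμ : IsDist μ)
    (hu : ∀ x, u x ∈ Set.Icc (0 : ℝ) 1) {q γ : ℝ} (hq : q = expect μ h) (hq1 : q < 1)
    (hqγ : |q - 1 / 2| ≤ γ) (hcal : |expect μ (fun x => u x * (g x - h x))| ≤ γ) :
    |expect (fun x => 2 * (μ x * (1 - g x))) u - expect (fun x => (1 - h x) * μ x / (1 - q)) u|
      ≤ 4 * γ := by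
  have hneg : expect μ (fun x => u x * ((1 - g x) - (1 - h x))) =
      -expect μ (fun x => u x * (g x - h x)) := by
    simp only [expect, ← sum_neg_distrib]; congr 1; ext x; ring
  obtain ⟨hqγ1, hqγ2⟩ := abs_le.1 hqγ
  exact abs_expect_sub_tilt_le (fun x => sub_nonneg.2 (hh x)) hμ.1 hu
    (by rw [expect_one_sub hμ, hq]) (by linarith) (abs_le.2 ⟨by linarith, by linarith⟩)
    (by rwa [hneg, abs_neg])

lemma abs_expect_sub_half_le {μ g h D : X → ℝ} (hD : IsDist D)
    (hDμ : ∀ x, D x = 2 * (μ x * g x)) {γ : ℝ}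
    (hcal : |expect μ (fun x => g x - h x)| ≤ γ) : |expect μ h - 1 / 2| ≤ γ := by
  have hg : expect μ g = 1 / 2 := by
    have : ∀ x, μ x * g x = D x / 2 := fun x => by rw [hDμ x]; ring
    simp only [expect, this, ← sum_div, hD.2]
  rwa [expect_sub_distrib, hg, abs_sub_comm] at hcal

end Calibration

theorem abs_expect_prodDist_sub_le {X Y : Type*} [Fintype X] {P Q : X → ℝ} (hP : IsDist P)
    (hQ : IsDist Q) (h : X → Y) {c : ℝ}
    (hPQ : ∀ w : Y → ℝ, (∀ y, w y ∈ Set.Icc (0 : ℝ) 1) →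
      |expect P (fun x => w (h x)) - expect Q (fun x => w (h x))| ≤ c)
    (n : ℕ) (F : (Fin n → Y) → ℝ) (hF : ∀ y, F y ∈ Set.Icc (0 : ℝ) 1) :
    |expect (prodDist n P) (fun z => F (h ∘ z)) - expect (prodDist n Q) (fun z => F (h ∘ z))|
      ≤ n * c := by
  induction n with
  | zero => simp [expect, prodDist]
  | succ n ih =>
    -- Hybrid argument: swap the first coordinate from `Q` to `P`, then the remaining `n`.
    set wP : Y → ℝ := fun y => expect (prodDist n P) (fun t => F (Fin.cons y (h ∘ t)))
    set wQ : Y → ℝ := fun y => expect (prodDist n Q) (fun t => F (Fin.cons y (h ∘ t)))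
    have hwP : ∀ y, wP y ∈ Set.Icc (0 : ℝ) 1 :=
      fun y => expect_mem_Icc (isDist_prodDist hP n) fun t => hF _
    have hfirst := hPQ wP hwP
    have hrest : |expect Q (fun x => wP (h x)) - expect Q (fun x => wQ (h x))| ≤ n * c := by
      rw [← expect_sub_distrib]
      exact abs_expect_le hQ fun x => ih (fun t => F (Fin.cons (h x) t)) fun t => hF _
    simp only [expect_prodDist_succ, Fin.comp_cons]
    calc _ ≤ _ := abs_sub_le _ (expect Q fun x => wP (h x)) _
      _ ≤ c + n * c := add_le_add hfirst hrest
      _ = (n + 1 : ℕ) * c := by push_cast; ring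

section TotalVariation

variable {Z : Type*} [Fintype Z]

lemma dTV_eq_sum_max {A B : Z → ℝ} (hAB : ∑ z, A z = ∑ z, B z) :
    dTV A B = ∑ z, max (B z - A z) 0 := by
  have habs : ∀ z, |A z - B z| = 2 * max (B z - A z) 0 - (B z - A z) := fun z => by
    rcases le_total (B z) (A z) with hle | hle
    · rw [max_eq_right (by linarith), abs_of_nonneg (by linarith)]; ring
    · rw [max_eq_left (by linarith), abs_of_nonpos (by linarith)]; ring
  simp only [dTV, habs, sum_sub_distrib, ← mul_sum, hAB, sub_self]
  ring

/-- `max (B z - A z) 0 - (B z - A z) * f z` is the pointwise loss of the test `f` against the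
optimal test `{z | A z < B z}`. -/
lemma dTV_le_expect_sub_add {A B W f : Z → ℝ} (hAB : ∑ z, A z = ∑ z, B z)
    (hW : ∑ z, W z = 1) {ε : ℝ}
    (herr : ∀ z, max (B z - A z) 0 - (B z - A z) * f z ≤ ε * W z) :
    dTV A B ≤ expect B f - expect A f + ε := by
  have hsum := sum_le_sum fun z (_ : z ∈ univ) => herr z
  rw [sum_sub_distrib, ← mul_sum, hW, mul_one, ← dTV_eq_sum_max hAB] at hsum
  rw [← expect_weight_sub_distrib]
  simp only [expect]
  linarith

end TotalVariation

lemma max_sub_mul_ite_le_of_le (s : Prop) [Decidable s] {a b u v : ℝ} (ha : 0 < a)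
    (hab : a ≤ b) (hu : 0 ≤ u) (hv : 0 ≤ v) (hs : s → v ≤ u) (hns : ¬s → u ≤ v) :
    max (u / b - v / a) 0 - (u / b - v / a) * (if s then 1 else 0) ≤ (1 - a / b) * (v / a) := by
  have hb : 0 < b := ha.trans_le hab
  have hvb : v / b ≤ v / a := div_le_div_of_nonneg_left hv ha hab
  have hub : u / b ≤ u / a := div_le_div_of_nonneg_left hu ha hab
  rw [show (1 - a / b) * (v / a) = v / a - v / b by field_simp]
  split_ifs with hsv
  · have : v / b ≤ u / b := div_le_div_of_nonneg_right (hs hsv) hb.le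
    rw [mul_one, sub_le_iff_le_add]
    exact max_le (by linarith) (by linarith)
  · have : u / a ≤ v / a := div_le_div_of_nonneg_right (hns hsv) ha.le
    rw [mul_zero, sub_zero]
    exact max_le (by linarith) (by linarith)

lemma max_sub_mul_ite_le_of_ge (s : Prop) [Decidable s] {a b u v : ℝ} (hb : 0 < b)
    (hba : b ≤ a) (hu : 0 ≤ u) (hv : 0 ≤ v) (hs : s → v ≤ u) (hns : ¬s → u ≤ v) :
    max (u / b - v / a) 0 - (u / b - v / a) * (if s then 1 else 0) ≤ (1 - b / a) * (u / b) := by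
  have ha : 0 < a := hb.trans_le hba
  have hva : v / a ≤ v / b := div_le_div_of_nonneg_left hv hb hba
  have hua : u / a ≤ u / b := div_le_div_of_nonneg_left hu hb hba
  rw [show (1 - b / a) * (u / b) = u / b - u / a by field_simp]
  split_ifs with hsv
  · have : v / a ≤ u / a := div_le_div_of_nonneg_right (hs hsv) ha.le
    rw [mul_one, sub_le_iff_le_add]
    exact max_le (by linarith) (by linarith)
  · have : u / a ≤ v / a := div_le_div_of_nonneg_right (hns hsv) ha.le
    rw [mul_zero, sub_zero]
    exact max_le (by linarith) (by linarith)

lemma one_sub_div_pow_le {q : ℝ} (hq : 1 / 2 ≤ q) (hq1 : q ≤ 1) (k : ℕ) :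
    1 - ((1 - q) / q) ^ k ≤ 2 * k * (2 * q - 1) := by
  have hq0 : 0 < q := by linarith
  have hbern := one_add_mul_sub_le_pow (a := (1 - q) / q)
    (by linarith [div_nonneg (by linarith : (0:ℝ) ≤ 1 - q) hq0.le]) k
  have hr : 1 - (1 - q) / q ≤ 2 * (2 * q - 1) := by
    rw [sub_le_iff_le_add, ← sub_le_iff_le_add', le_div_iff₀ hq0]; nlinarith
  nlinarith [(Nat.cast_nonneg k : (0:ℝ) ≤ k)]

theorem dTV_prodDist_tilt_le {X : Type*} [Fintype X] {μ h : X → ℝ} (hμ : IsDist μ)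
    (hh : ∀ x, h x ∈ Set.Icc (0 : ℝ) 1) {p γ : ℝ} (hp : p = expect μ h) (hp0 : 0 < p)
    (hp1 : p < 1) (hpγ : |p - 1 / 2| ≤ γ) (k : ℕ) :
    dTV (prodDist k fun x => (1 - h x) * μ x / (1 - p)) (prodDist k fun x => h x * μ x / p) ≤
      expect (prodDist k fun x => h x * μ x / p)
          (fun z => if ∏ i, (1 - h (z i)) < ∏ i, h (z i) then 1 else 0) -
        expect (prodDist k fun x => (1 - h x) * μ x / (1 - p))
          (fun z => if ∏ i, (1 - h (z i)) < ∏ i, h (z i) then 1 else 0) + 4 * k * γ := by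
  have hA : IsDist (prodDist k fun x => (1 - h x) * μ x / (1 - p)) :=
    isDist_prodDist (isDist_tilt_one_sub hμ (fun x => (hh x).2) hp hp1) k
  have hB : IsDist (prodDist k fun x => h x * μ x / p) :=
    isDist_prodDist (isDist_tilt hμ (fun x => (hh x).1) hp hp0) k
  have hprod (f : X → ℝ) (c : ℝ) (z : Fin k → X) :
      prodDist k (fun x => f x * μ x / c) z = (∏ i, f (z i)) * (∏ i, μ (z i)) / c ^ k := by
    simp only [prodDist, prod_div_distrib, prod_mul_distrib, prod_const, card_univ,
      Fintype.card_fin]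
  have hAB : ∑ z, prodDist k (fun x => (1 - h x) * μ x / (1 - p)) z =
      ∑ z, prodDist k (fun x => h x * μ x / p) z := by rw [hA.2, hB.2]
  obtain ⟨hγ1, hγ2⟩ := abs_le.1 hpγ
  have hC : ∀ z : Fin k → X, 0 ≤ ∏ i, μ (z i) := fun z => prod_nonneg fun i _ => hμ.1 _
  have hH : ∀ z : Fin k → X, 0 ≤ (∏ i, h (z i)) * ∏ i, μ (z i) := fun z =>
    mul_nonneg (prod_nonneg fun i _ => (hh _).1) (hC z)
  have hH' : ∀ z : Fin k → X, 0 ≤ (∏ i, (1 - h (z i))) * ∏ i, μ (z i) := fun z =>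
    mul_nonneg (prod_nonneg fun i _ => sub_nonneg.2 (hh _).2) (hC z)
  rcases le_total (1 / 2) p with hp2 | hp2
  · refine dTV_le_expect_sub_add hAB hA.2 fun z => ?_
    rw [hprod, hprod]
    have hbern : 1 - (1 - p) ^ k / p ^ k ≤ 4 * k * γ := by
      rw [← div_pow]; nlinarith [one_sub_div_pow_le hp2 hp1.le k]
    refine (max_sub_mul_ite_le_of_le _ (pow_pos (by linarith) k)
      (pow_le_pow_left₀ (by linarith) (by linarith) k) (hH z) (hH' z)
      (fun hs => mul_le_mul_of_nonneg_right hs.le (hC z))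
      (fun hs => mul_le_mul_of_nonneg_right (not_lt.1 hs) (hC z))).trans ?_
    exact mul_le_mul_of_nonneg_right hbern (div_nonneg (hH' z) (pow_nonneg (by linarith) k))
  · refine dTV_le_expect_sub_add hAB hB.2 fun z => ?_
    rw [hprod, hprod]
    have hbern : 1 - p ^ k / (1 - p) ^ k ≤ 4 * k * γ := by
      have := one_sub_div_pow_le (q := 1 - p) (by linarith) (by linarith) k
      rw [sub_sub_cancel] at this
      rw [← div_pow]; nlinarith
    refine (max_sub_mul_ite_le_of_ge _ (pow_pos hp0 k)
      (pow_le_pow_left₀ hp0.le (by linarith) k) (hH z) (hH' z)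
      (fun hs => mul_le_mul_of_nonneg_right hs.le (hC z))
      (fun hs => mul_le_mul_of_nonneg_right (not_lt.1 hs) (hC z))).trans ?_
    exact mul_le_mul_of_nonneg_right hbern (div_nonneg (hH z) (pow_nonneg hp0.le k))

theorem stmt_1_general {X : Type*} [Fintype X]
    (D0 D1 : X → ℝ) (hD0 : IsDist D0) (hD1 : IsDist D1)
    (γ : ℝ) (hγ : γ ∈ Set.Ioo (0:ℝ) (1/10))
    (k : ℕ)
    (DX : X → ℝ) (hDX : DX = fun x => (D0 x + D1 x) / 2)
    (g : X → ℝ)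
    (hg : g = fun x => if 0 < D0 x + D1 x then D1 x / (D0 x + D1 x) else 0)
    (h : X → ℝ) (hh : ∀ x, h x ∈ Set.Icc (0:ℝ) 1)
    (hcal : ∀ w : ℝ → ℝ, (∀ t, w t ∈ Set.Icc (0:ℝ) 1) →
      |expect DX (fun x => w (h x) * (g x - h x))| ≤ γ)
    (p : ℝ) (hp : p = expect DX h)
    (Dt0 Dt1 : X → ℝ)
    (hDt0 : Dt0 = fun z => (1 - h z) * DX z / (1 - p))
    (hDt1 : Dt1 = fun z => h z * DX z / p)
    (h' : (Fin k → X) → ℝ)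
    (hh' : h' = fun z => if (∏ i, h (z i)) > ∏ i, (1 - h (z i)) then 1 else 0) :
    0 < p ∧ p < 1 ∧
    |expect (prodDist k D1) h' - expect (prodDist k D0) h'| ≥
      dTV (prodDist k Dt0) (prodDist k Dt1) - 14 * k * γ := by
  subst hDt0 hDt1 hh'
  have hDX1 (x : X) : D1 x = 2 * (DX x * g x) := by
    rw [hDX, hg]; exact (two_mul_mul_posterior (hD0.1 x) (hD1.1 x)).symm
  have hDX0 (x : X) : D0 x = 2 * (DX x * (1 - g x)) := by
    rw [hDX, hg]; exact (two_mul_mul_one_sub_posterior (hD0.1 x) (hD1.1 x)).symm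
  have hμ : IsDist DX := hDX ▸ isDist_midpoint hD0 hD1
  have hpγ : |p - 1 / 2| ≤ γ := hp ▸ abs_expect_sub_half_le hD1 hDX1
    (by simpa using hcal 1 fun _ => ⟨zero_le_one, le_rfl⟩)
  obtain ⟨hp0, hp1⟩ : 0 < p ∧ p < 1 := by
    obtain ⟨hγ1, hγ2⟩ := abs_le.1 hpγ; constructor <;> linarith [hγ.2]
  refine ⟨hp0, hp1, ?_⟩
  set F : (Fin k → ℝ) → ℝ := fun y => if ∏ i, (1 - y i) < ∏ i, y i then 1 else 0
  have hF (y : Fin k → ℝ) : F y ∈ Set.Icc (0:ℝ) 1 := by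
    simp only [F]; split_ifs <;> norm_num
  have hyb1 := abs_expect_prodDist_sub_le hD1 (isDist_tilt hμ (fun x => (hh x).1) hp hp0) h
    (fun w hw => funext hDX1 ▸ abs_expect_sub_tilt_le (fun x => (hh x).1) hμ.1 (fun x => hw _)
      hp hp0 hpγ (hcal w hw)) k F hF
  have hyb0 := abs_expect_prodDist_sub_le hD0
    (isDist_tilt_one_sub hμ (fun x => (hh x).2) hp hp1) h
    (fun w hw => funext hDX0 ▸ abs_expect_sub_tilt_one_sub_le (fun x => (hh x).2) hμ
      (fun x => hw _) hp hp1 hpγ (hcal w hw)) k F hF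
  have htv : dTV _ _ ≤ expect _ (fun z => F (h ∘ z)) - expect _ (fun z => F (h ∘ z)) + _ :=
    dTV_prodDist_tilt_le hμ hh hp hp0 hp1 hpγ k
  change |expect _ (fun z => F (h ∘ z)) - expect _ (fun z => F (h ∘ z))| ≥ _
  have hkγ : 0 ≤ (k : ℝ) * γ := mul_nonneg k.cast_nonneg hγ.1.le
  linarith [le_abs_self (expect (prodDist k D1) (fun z => F (h ∘ z)) -
    expect (prodDist k D0) (fun z => F (h ∘ z))), abs_le.1 hyb1, abs_le.1 hyb0]

theorem stmt_1 {X : Type*} [Fintype X] [Nonempty X]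
    (D0 D1 : X → ℝ) (hD0 : IsDist D0) (hD1 : IsDist D1)
    (γ : ℝ) (hγ : γ ∈ Set.Ioo (0:ℝ) (1/10))
    (k : ℕ) (hk : 1 ≤ k)
    (DX : X → ℝ) (hDX : DX = fun x => (D0 x + D1 x) / 2)
    (g : X → ℝ)
    (hg : g = fun x => if 0 < D0 x + D1 x then D1 x / (D0 x + D1 x) else 0)
    (h : X → ℝ) (hh : ∀ x, h x ∈ Set.Icc (0:ℝ) 1)
    (hcal : ∀ w : ℝ → ℝ, (∀ t, w t ∈ Set.Icc (0:ℝ) 1) →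
      |expect DX (fun x => w (h x) * (g x - h x))| ≤ γ)
    (p : ℝ) (hp : p = expect DX h)
    (Dt0 Dt1 : X → ℝ)
    (hDt0 : Dt0 = fun z => (1 - h z) * DX z / (1 - p))
    (hDt1 : Dt1 = fun z => h z * DX z / p)
    (h' : (Fin k → X) → ℝ)
    (hh' : h' = fun z => if (∏ i, h (z i)) > ∏ i, (1 - h (z i)) then 1 else 0) :
    0 < p ∧ p < 1 ∧
    |expect (prodDist k D1) h' - expect (prodDist k D0) h'| ≥
      dTV (prodDist k Dt0) (prodDist k Dt1) - 14 * k * γ :=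
  stmt_1_general D0 D1 hD0 hD1 γ hγ k DX hDX g hg h hh hcal p hp Dt0 Dt1 hDt0 hDt1 h' hh'
end

section
/- Let X be a nonempty finite type, let D_0, D_1 be distributions on X, let 𝓕 be a family of functions X → [0,1], let ε ∈ (0,1) and γ ∈ (0, ε/2). Set D_X := (1−ε)·D_0 + ε·D_1 and let g be the associated tilted posterior function. Suppose h : X → [0,1] is (𝓕, ε²)-regular and γ-calibrated for g under D_X. Set p := E_{D_X}[h]. Then p > 0, and defining the distribution D̃_1(z) := h(z)·D_X(z)/p, for every f ∈ 𝓕 one has |E_{D_1}[f] − E_{D̃_1}[f]| ≤ ε + 2γ/ε². -/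
/-
The tilted posterior satisfies `D_X · g = ε · D_1`, so `E_{D_X}[f g] = ε E_{D_1}[f]`; in
particular `E_{D_X}[g] = ε`, and calibration against the constant weight `1` gives `|p - ε| ≤ γ`.
Regularity gives `|E_{D_X}[f g] - E_{D_X}[f h]| ≤ ε²`, and the claim follows by comparing
`E_{D_X}[f g] / ε` with `E_{D_X}[f h] / p`, using `0 ≤ E_{D_X}[f h] ≤ p`.
-/

lemma abs_div_sub_div_le {a b s t : ℝ} (hs : 0 < s) (ht : 0 < t) (hb : 0 ≤ b) (hbt : b ≤ t) :
    |a / s - b / t| ≤ |a - b| / s + |t - s| / s := by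
  have hsplit : a / s - b / t = (a - b) / s + b / t * ((t - s) / s) := by
    field_simp
    ring
  have hbt' : b / t ≤ 1 := (div_le_one ht).2 hbt
  calc |a / s - b / t| ≤ |(a - b) / s| + |b / t * ((t - s) / s)| := hsplit ▸ abs_add_le _ _
    _ = |a - b| / s + b / t * (|t - s| / s) := by
      rw [abs_mul, abs_div (a - b), abs_div (t - s), abs_of_pos hs,
        abs_of_nonneg (div_nonneg hb ht.le)]
    _ ≤ |a - b| / s + |t - s| / s := by
      gcongr
      exact mul_le_of_le_one_left (by positivity) hbt'

section Tilted

variable {X : Type*}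

noncomputable def mixture (ε : ℝ) (D0 D1 : X → ℝ) : X → ℝ :=
  fun x => (1 - ε) * D0 x + ε * D1 x

noncomputable def tiltedPosterior (ε : ℝ) (D0 D1 : X → ℝ) : X → ℝ :=
  fun x => if 0 < mixture ε D0 D1 x then ε * D1 x / mixture ε D0 D1 x else 0

variable {D0 D1 : X → ℝ} {ε : ℝ}

lemma mixture_nonneg (hD0 : ∀ x, 0 ≤ D0 x) (hD1 : ∀ x, 0 ≤ D1 x) (hε0 : 0 ≤ ε)
    (hε1 : ε ≤ 1) (x : X) : 0 ≤ mixture ε D0 D1 x :=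
  add_nonneg (mul_nonneg (sub_nonneg.2 hε1) (hD0 x)) (mul_nonneg hε0 (hD1 x))

lemma mixture_mul_tiltedPosterior (hD0 : ∀ x, 0 ≤ D0 x) (hD1 : ∀ x, 0 ≤ D1 x)
    (hε0 : 0 ≤ ε) (hε1 : ε ≤ 1) (x : X) :
    mixture ε D0 D1 x * tiltedPosterior ε D0 D1 x = ε * D1 x := by
  unfold tiltedPosterior
  split_ifs with hpos
  · field_simp
  · have h0 : (1 - ε) * D0 x + ε * D1 x = 0 :=
      le_antisymm (not_lt.1 hpos) (mixture_nonneg hD0 hD1 hε0 hε1 x)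
    have := mul_nonneg (sub_nonneg.2 hε1) (hD0 x)
    have := mul_nonneg hε0 (hD1 x)
    simp only [mul_zero]
    linarith

variable [Fintype X]

lemma expect_sub (D f g : X → ℝ) :
    expect D (fun x => f x - g x) = expect D f - expect D g := by
  simp only [expect, mul_sub, Finset.sum_sub_distrib]

lemma expect_nonneg {D f : X → ℝ} (hD : ∀ x, 0 ≤ D x) (hf : ∀ x, 0 ≤ f x) :
    0 ≤ expect D f :=
  Finset.sum_nonneg fun x _ => mul_nonneg (hD x) (hf x)

lemma expect_mono {D f g : X → ℝ} (hD : ∀ x, 0 ≤ D x) (hfg : ∀ x, f x ≤ g x) :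
    expect D f ≤ expect D g :=
  Finset.sum_le_sum fun x _ => mul_le_mul_of_nonneg_left (hfg x) (hD x)

lemma expect_reweight (D w f : X → ℝ) (c : ℝ) :
    expect (fun z => w z * D z / c) f = expect D (fun x => f x * w x) / c := by
  simp only [expect, Finset.sum_div]
  exact Finset.sum_congr rfl fun x _ => by ring

lemma expect_mixture_mul_tiltedPosterior (hD0 : ∀ x, 0 ≤ D0 x) (hD1 : ∀ x, 0 ≤ D1 x)
    (hε0 : 0 ≤ ε) (hε1 : ε ≤ 1) (f : X → ℝ) :
    expect (mixture ε D0 D1) (fun x => f x * tiltedPosterior ε D0 D1 x) = ε * expect D1 f := by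
  simp only [expect, Finset.mul_sum]
  refine Finset.sum_congr rfl fun x _ => ?_
  linear_combination f x * mixture_mul_tiltedPosterior hD0 hD1 hε0 hε1 x

lemma expect_mixture_tiltedPosterior (hD0 : ∀ x, 0 ≤ D0 x) (hD1 : IsDist D1) (hε0 : 0 ≤ ε)
    (hε1 : ε ≤ 1) : expect (mixture ε D0 D1) (tiltedPosterior ε D0 D1) = ε := by
  simpa [expect, hD1.2] using
    expect_mixture_mul_tiltedPosterior hD0 hD1.1 hε0 hε1 (fun _ => 1)

end Tilted

theorem stmt_2_general {X : Type*} [Fintype X]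
    (D0 D1 : X → ℝ) (hD0 : IsDist D0) (hD1 : IsDist D1)
    (𝓕 : Set (X → ℝ)) (h𝓕 : ∀ f ∈ 𝓕, ∀ x, f x ∈ Set.Icc (0:ℝ) 1)
    (ε γ : ℝ) (hε : ε ∈ Set.Ioo (0:ℝ) 1) (hγ : γ ∈ Set.Ioo (0:ℝ) (ε/2))
    (DX : X → ℝ) (hDX : DX = fun x => (1 - ε) * D0 x + ε * D1 x)
    (g : X → ℝ)
    (hg : g = fun x => if 0 < DX x then ε * D1 x / DX x else 0)
    (h : X → ℝ) (hh : ∀ x, h x ∈ Set.Icc (0:ℝ) 1)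
    (hreg : ∀ f ∈ 𝓕, |expect DX (fun x => f x * (g x - h x))| ≤ ε ^ 2)
    (hcal : ∀ w : ℝ → ℝ, (∀ t, w t ∈ Set.Icc (0:ℝ) 1) →
      |expect DX (fun x => w (h x) * (g x - h x))| ≤ γ)
    (p : ℝ) (hp : p = expect DX h) :
    0 < p ∧
    ∀ f ∈ 𝓕,
      |expect D1 f - expect (fun z => h z * DX z / p) f| ≤ ε + 2 * γ / ε ^ 2 := by
  obtain ⟨hε0, hε1⟩ := hε
  obtain rfl : DX = mixture ε D0 D1 := hDX
  obtain rfl : g = tiltedPosterior ε D0 D1 := hg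
  have hDX := mixture_nonneg hD0.1 hD1.1 hε0.le hε1.le
  have hpε : |p - ε| ≤ γ := by
    have hcal1 := hcal (fun _ => 1) fun _ => by norm_num
    simp only [one_mul, expect_sub,
      expect_mixture_tiltedPosterior hD0.1 hD1 hε0.le hε1.le] at hcal1
    rwa [hp, abs_sub_comm]
  have hp0 : 0 < p := by linarith [(abs_le.1 hpε).1, hγ.2]
  refine ⟨hp0, fun f hf => ?_⟩
  have hD1f : expect D1 f =
      expect (mixture ε D0 D1) (fun x => f x * tiltedPosterior ε D0 D1 x) / ε := by
    rw [expect_mixture_mul_tiltedPosterior hD0.1 hD1.1 hε0.le hε1.le]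
    field_simp
  have hreg' := hreg f hf
  simp only [mul_sub, expect_sub] at hreg'
  have hfh0 := expect_nonneg hDX fun x => mul_nonneg (h𝓕 f hf x).1 (hh x).1
  have hfhp : expect (mixture ε D0 D1) (fun x => f x * h x) ≤ p :=
    hp ▸ expect_mono hDX fun x => mul_le_of_le_one_left (hh x).1 (h𝓕 f hf x).2
  have hγε : γ / ε ≤ 2 * γ / ε ^ 2 := by
    rw [div_le_div_iff₀ hε0 (by positivity)]
    nlinarith [mul_pos hγ.1 hε0]
  rw [hD1f, expect_reweight]
  calc _ ≤ _ := abs_div_sub_div_le hε0 hp0 hfh0 hfhp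
    _ ≤ ε ^ 2 / ε + γ / ε := by gcongr
    _ = ε + γ / ε := by rw [pow_two, mul_div_cancel_right₀ _ hε0.ne']
    _ ≤ ε + 2 * γ / ε ^ 2 := by linarith

theorem stmt_2 {X : Type*} [Fintype X] [Nonempty X]
    (D0 D1 : X → ℝ) (hD0 : IsDist D0) (hD1 : IsDist D1)
    (𝓕 : Set (X → ℝ)) (h𝓕 : ∀ f ∈ 𝓕, ∀ x, f x ∈ Set.Icc (0:ℝ) 1)
    (ε γ : ℝ) (hε : ε ∈ Set.Ioo (0:ℝ) 1) (hγ : γ ∈ Set.Ioo (0:ℝ) (ε/2))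
    (DX : X → ℝ) (hDX : DX = fun x => (1 - ε) * D0 x + ε * D1 x)
    (g : X → ℝ)
    (hg : g = fun x => if 0 < DX x then ε * D1 x / DX x else 0)
    (h : X → ℝ) (hh : ∀ x, h x ∈ Set.Icc (0:ℝ) 1)
    (hreg : ∀ f ∈ 𝓕, |expect DX (fun x => f x * (g x - h x))| ≤ ε ^ 2)
    (hcal : ∀ w : ℝ → ℝ, (∀ t, w t ∈ Set.Icc (0:ℝ) 1) →
      |expect DX (fun x => w (h x) * (g x - h x))| ≤ γ)
    (p : ℝ) (hp : p = expect DX h) :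
    0 < p ∧
    ∀ f ∈ 𝓕,
      |expect D1 f - expect (fun z => h z * DX z / p) f| ≤ ε + 2 * γ / ε ^ 2 :=
  stmt_2_general D0 D1 hD0 hD1 𝓕 h𝓕 ε γ hε hγ DX hDX g hg h hh hreg hcal p hp
end

section
/- Let X be a nonempty finite type and D_0, D_1 distributions on X. Set D_X := (1/2)(D_0 + D_1) and let g be the associated posterior function. If h : X → [0,1] is γ-calibrated for g under D_X, then for every function w : ℝ → [0,1]: |E_{D_1}[w∘h] − 2·E_{D_X}[h·(w∘h)]| ≤ 2γ and |E_{D_0}[w∘h] − 2·E_{D_X}[(1−h)·(w∘h)]| ≤ 2γ. -/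
theorem add_mul_ite_div_add {a b : ℝ} (ha : 0 ≤ a) (hb : 0 ≤ b) :
    (a + b) * (if 0 < a + b then b / (a + b) else 0) = b := by
  split_ifs with hpos
  · field_simp
  · linarith

section

variable {X : Type*} [Fintype X]

theorem expect_sub_mul_expect_eq_of_density {D D' ρ : X → ℝ} {c : ℝ}
    (hD' : ∀ x, D' x = c * D x * ρ x) (f u : X → ℝ) :
    expect D' f - c * expect D (fun x => u x * f x) =
      c * expect D (fun x => f x * (ρ x - u x)) := by
  unfold expect
  rw [Finset.mul_sum, Finset.mul_sum, ← Finset.sum_sub_distrib]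
  refine Finset.sum_congr rfl fun x _ => ?_
  rw [hD' x]
  ring

theorem expect_sub_mul_expect_one_sub_eq_neg {D₀ D₁ D : X → ℝ} {c : ℝ}
    (hD : ∀ x, D₀ x + D₁ x = c * D x) (f u : X → ℝ) :
    expect D₀ f - c * expect D (fun x => (1 - u x) * f x) =
      -(expect D₁ f - c * expect D (fun x => u x * f x)) := by
  unfold expect
  rw [Finset.mul_sum, Finset.mul_sum, ← Finset.sum_sub_distrib, ← Finset.sum_sub_distrib,
    ← Finset.sum_neg_distrib]
  refine Finset.sum_congr rfl fun x _ => ?_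
  rw [eq_sub_of_add_eq (hD x)]
  ring

end

theorem stmt_11_general {X : Type*} [Fintype X]
    (D0 D1 : X → ℝ) (hD0 : IsDist D0) (hD1 : IsDist D1)
    (DX : X → ℝ) (hDX : DX = fun x => (D0 x + D1 x) / 2)
    (g : X → ℝ)
    (hg : g = fun x => if 0 < D0 x + D1 x then D1 x / (D0 x + D1 x) else 0)
    (γ : ℝ)
    (h : X → ℝ)
    (hcal : ∀ w : ℝ → ℝ, (∀ t, w t ∈ Set.Icc (0:ℝ) 1) →
      |expect DX (fun x => w (h x) * (g x - h x))| ≤ γ) :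
    ∀ w : ℝ → ℝ, (∀ t, w t ∈ Set.Icc (0:ℝ) 1) →
      |expect D1 (fun x => w (h x)) - 2 * expect DX (fun x => h x * w (h x))| ≤ 2 * γ ∧
      |expect D0 (fun x => w (h x)) - 2 * expect DX (fun x => (1 - h x) * w (h x))| ≤ 2 * γ := by
  intro w hw
  have hsum : ∀ x, D0 x + D1 x = 2 * DX x := fun x => by
    rw [hDX, mul_div_cancel₀ _ two_ne_zero]
  have hdensity : ∀ x, D1 x = 2 * DX x * g x := fun x => by
    rw [← hsum, hg, add_mul_ite_div_add (hD0.1 x) (hD1.1 x)]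
  have hbias := expect_sub_mul_expect_eq_of_density hdensity (fun x => w (h x)) h
  have hcal_w := hcal w hw
  constructor
  · rw [hbias, abs_mul, abs_two]
    linarith
  · rw [expect_sub_mul_expect_one_sub_eq_neg hsum, abs_neg, hbias, abs_mul, abs_two]
    linarith

theorem stmt_11 {X : Type*} [Fintype X] [Nonempty X]
    (D0 D1 : X → ℝ) (hD0 : IsDist D0) (hD1 : IsDist D1)
    (DX : X → ℝ) (hDX : DX = fun x => (D0 x + D1 x) / 2)
    (g : X → ℝ)
    (hg : g = fun x => if 0 < D0 x + D1 x then D1 x / (D0 x + D1 x) else 0)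
    (γ : ℝ)
    (h : X → ℝ) (hh : ∀ x, h x ∈ Set.Icc (0:ℝ) 1)
    (hcal : ∀ w : ℝ → ℝ, (∀ t, w t ∈ Set.Icc (0:ℝ) 1) →
      |expect DX (fun x => w (h x) * (g x - h x))| ≤ γ) :
    ∀ w : ℝ → ℝ, (∀ t, w t ∈ Set.Icc (0:ℝ) 1) →
      |expect D1 (fun x => w (h x)) - 2 * expect DX (fun x => h x * w (h x))| ≤ 2 * γ ∧
      |expect D0 (fun x => w (h x)) - 2 * expect DX (fun x => (1 - h x) * w (h x))| ≤ 2 * γ :=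
  stmt_11_general D0 D1 hD0 hD1 DX hDX g hg γ h hcal
end
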